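/- arXiv:2105.15007 — 6 statements merged into one kernel-verified Lean document; each statement's English description precedes it below -/
import Mathlib

section
/- Let U be a finite set and S a family of subsets of U such that some subfamily Z ⊆ S covers U (i.e., ⋃_{z∈Z} z = U). Suppose we greedily pick sets c₁,…,c_Y ∈ S with Y = ⌈2|Z|·log(1/α)⌉ such that, letting U_i = U \ (c₁ ∪ ⋯ ∪ c_{i−1}), each pick satisfies |c_i ∩ U_i| ≥ (1/2)·max_{c∈S} |c ∩ U_i|. Then |c₁ ∪ ⋯ ∪ c_Y| ≥ (1−α)·|U|. -/
/-!
If the `k` sets of `Z` cover `U`, they cover in particular the part `V` of `U` still uncovered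
after `i` picks, so one of them meets at least `|V| / k` of its points. A half-approximate greedy
pick therefore covers at least `|V| / (2k)` new points, and the uncovered part shrinks by the factor
`1 - 1/(2k) ≤ exp (-1/(2k))` at every step. After `⌈2k log (1/α)⌉` steps at most `α |U|` points are
left uncovered.
-/

open Finset Real

namespace Finset

variable {γ : Type*} [DecidableEq γ]

theorem exists_card_le_card_mul_card_inter {V : Finset γ} {Z : Finset (Finset γ)}
    (hV : V ⊆ Z.biUnion id) (hZ : Z.Nonempty) : ∃ z ∈ Z, #V ≤ #Z * #(z ∩ V) := by
  have hsum : #V ≤ ∑ z ∈ Z, #(z ∩ V) :=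
    calc #V = #(Z.biUnion id ∩ V) := by rw [inter_eq_right.2 hV]
      _ = #(Z.biUnion (· ∩ V)) := by rw [biUnion_inter]; rfl
      _ ≤ _ := card_biUnion_le
  refine exists_le_of_sum_le hZ ?_
  rw [sum_const, smul_eq_mul, ← mul_sum]
  exact Nat.mul_le_mul_left _ hsum

theorem card_sdiff_le_of_half_max_le_card_inter {V c : Finset γ} {Z : Finset (Finset γ)}
    (hV : V ⊆ Z.biUnion id) (hc : ∀ s ∈ Z, (#(s ∩ V) : ℝ) / 2 ≤ #(c ∩ V)) :
    (#(V \ c) : ℝ) ≤ (1 - 1 / (2 * #Z)) * #V := by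
  rcases Z.eq_empty_or_nonempty with rfl | hZ
  · simp [subset_empty.1 (by simpa using hV)]
  obtain ⟨z, hz, hVz⟩ := exists_card_le_card_mul_card_inter hV hZ
  have hk : (0 : ℝ) < #Z := by exact_mod_cast hZ.card_pos
  have hVz' : (#V : ℝ) ≤ #Z * #(z ∩ V) := by exact_mod_cast hVz
  have hnew : (#V : ℝ) / (2 * #Z) ≤ #(c ∩ V) := by
    rw [div_le_iff₀ (by positivity)]
    nlinarith [hc z hz]
  have hsplit : (#(V \ c) : ℝ) + #(c ∩ V) = #V := by
    rw [inter_comm]; exact_mod_cast card_sdiff_add_card_inter V c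
  linarith [show (1 - 1 / (2 * #Z)) * (#V : ℝ) = #V - #V / (2 * #Z) by ring]

theorem sdiff_biUnion_range_succ (U : Finset γ) (c : ℕ → Finset γ) (i : ℕ) :
    U \ (range (i + 1)).biUnion c = (U \ (range i).biUnion c) \ c i := by
  rw [range_add_one, biUnion_insert, union_comm, sdiff_sdiff_left, sup_eq_union]

end Finset

theorem Real.one_sub_inv_pow_le {t α : ℝ} {n : ℕ} (ht : 1 ≤ t) (hα : 0 < α)
    (hn : t * log (1 / α) ≤ n) : (1 - 1 / t) ^ n ≤ α := by
  have hlog : -log α ≤ n / t := by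
    rw [le_div_iff₀ (by linarith), ← log_inv, ← one_div]
    linarith
  calc (1 - 1 / t) ^ n ≤ exp (-(1 / t)) ^ n :=
        pow_le_pow_left₀ (sub_nonneg.2 ((div_le_one (by linarith)).2 ht)) (one_sub_le_exp_neg _) n
    _ = exp (-(n / t)) := by rw [← exp_nat_mul]; ring_nf
    _ ≤ exp (log α) := exp_le_exp.2 (by linarith)
    _ = α := exp_log hα

theorem greedy_max_coverage_general {γ : Type*} [DecidableEq γ]
    (U : Finset γ) (S Z : Finset (Finset γ))
    (hZS : Z ⊆ S) (hcover : Z.biUnion id = U)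
    (α : ℝ) (hα : α ∈ Set.Ioo (0:ℝ) 1)
    (Y : ℕ) (hY : Y = ⌈2 * (Z.card : ℝ) * Real.log (1 / α)⌉₊)
    (c : ℕ → Finset γ)
    (hgreedy : ∀ i < Y, ∀ s ∈ S,
      ((s ∩ (U \ (Finset.range i).biUnion c)).card : ℝ) / 2
        ≤ ((c i ∩ (U \ (Finset.range i).biUnion c)).card : ℝ)) :
    (1 - α) * (U.card : ℝ) ≤ (((Finset.range Y).biUnion c).card : ℝ) := by
  rcases Z.eq_empty_or_nonempty with rfl | hZ
  · simp [← hcover]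
  have hk : (1 : ℝ) ≤ 2 * #Z := by
    have := hZ.card_pos
    norm_cast; omega
  have hdecay : (#(U \ (range Y).biUnion c) : ℝ) ≤ (1 - 1 / (2 * #Z)) ^ Y * #U := by
    simpa using le_geom (u := fun i ↦ (#(U \ (range i).biUnion c) : ℝ))
      (sub_nonneg.2 ((div_le_one (by linarith)).2 hk)) Y fun i hi ↦ by
        rw [sdiff_biUnion_range_succ]
        exact card_sdiff_le_of_half_max_le_card_inter (sdiff_subset.trans hcover.ge)
          fun s hs ↦ hgreedy i hi s (hZS hs)
  have hpow : (1 - 1 / (2 * #Z) : ℝ) ^ Y ≤ α :=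
    one_sub_inv_pow_le hk hα.1 (hY ▸ Nat.le_ceil _)
  have hsplit : (#U : ℝ) ≤ #(U \ (range Y).biUnion c) + #((range Y).biUnion c) := by
    exact_mod_cast card_le_card_sdiff_add_card
  nlinarith [mul_le_mul_of_nonneg_right hpow (Nat.cast_nonneg (α := ℝ) #U)]

theorem greedy_max_coverage {γ : Type*} [DecidableEq γ]
    (U : Finset γ) (S Z : Finset (Finset γ))
    (hZS : Z ⊆ S) (hcover : Z.biUnion id = U)
    (α : ℝ) (hα : α ∈ Set.Ioo (0:ℝ) 1)
    (Y : ℕ) (hY : Y = ⌈2 * (Z.card : ℝ) * Real.log (1 / α)⌉₊)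
    (c : ℕ → Finset γ)
    (hmem : ∀ i < Y, c i ∈ S)
    (hgreedy : ∀ i < Y, ∀ s ∈ S,
      ((s ∩ (U \ (Finset.range i).biUnion c)).card : ℝ) / 2
        ≤ ((c i ∩ (U \ (Finset.range i).biUnion c)).card : ℝ)) :
    (1 - α) * (U.card : ℝ) ≤ (((Finset.range Y).biUnion c).card : ℝ) :=
  greedy_max_coverage_general U S Z hZS hcover α hα Y hY c hgreedy
end

section
/- Let S be a finite set of points in ℝ^d and let C_R be a d-dimensional rectangular grid of cells with side length R shifted by a uniformly random offset in [0,R]^d. Then with probability at least 1−β, the number of cells C of the grid whose squared Euclidean distance to S is at most R²/d² is O(|S|/β). -/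
/-!
A cell close to `s` has its lower corner `γ + R j` in the box `∏ᵢ (sᵢ - R/d - R, sᵢ + R/d]`, so the
number of close cells is at most the number of points of the shifted lattice `γ + Rℤ^d` lying in
the `|S|` boxes attached to the points of `S`. Integrating this count over a fundamental domain of
`Rℤ^d` gives exactly the total volume of the boxes, `|S| (R + 2R/d)^d ≤ e² |S| R^d < 9 |S| R^d`,
and Markov's inequality concludes with `c = 9`.
-/

open MeasureTheory
open scoped ENNReal

/-- The cell of the shifted grid with side length `R`, shift `γ`, indexed by `j : Fin d → ℤ`. -/
def gridCell (d : ℕ) (R : ℝ) (γ : Fin d → ℝ) (j : Fin d → ℤ) : Set (Fin d → ℝ) :=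
  {x | ∀ i, γ i + R * j i ≤ x i ∧ x i < γ i + R * (j i + 1)}

/-- The number of cells of the shifted grid whose squared Euclidean distance to `S`
is at most `R²/d²`. -/
noncomputable def closeCellCount (d : ℕ) (R : ℝ) (S : Finset (Fin d → ℝ))
    (γ : Fin d → ℝ) : ℕ :=
  {j : Fin d → ℤ | ∃ s ∈ S, ∃ x ∈ gridCell d R γ j,
    ∑ i, (s i - x i)^2 ≤ R^2 / (d : ℝ)^2}.ncard

theorem Set.ncard_le_tsum_indicator_one {α : Type*} (s : Set α) :
    (s.ncard : ℝ≥0∞) ≤ ∑' a, s.indicator 1 a := by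
  rw [← tsum_subtype, Pi.one_def, ENNReal.tsum_set_one, ← ENat.toENNReal_coe, ENat.toENNReal_le]
  exact s.ncard_le_encard

theorem abs_sub_le_of_sum_sq_le {ι : Type*} [Fintype ι] {s y : ι → ℝ} {r : ℝ} (hr : 0 ≤ r)
    (h : ∑ i, (s i - y i) ^ 2 ≤ r ^ 2) (i : ι) : |s i - y i| ≤ r :=
  abs_le_of_sq_le_sq ((Finset.single_le_sum (fun k _ => sq_nonneg (s k - y k))
    (Finset.mem_univ i)).trans h) hr

theorem MeasureTheory.IsAddFundamentalDomain.setLIntegral_tsum_vadd {G α : Type*} [AddGroup G]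
    [AddAction G α] [MeasurableSpace α] [MeasurableConstVAdd G α] [Countable G] {s : Set α}
    {μ : Measure α} [VAddInvariantMeasure G α μ] (h : IsAddFundamentalDomain G s μ)
    {f : α → ℝ≥0∞} (hf : Measurable f) :
    ∫⁻ x in s, ∑' g : G, f (g +ᵥ x) ∂μ = ∫⁻ x, f x ∂μ := by
  rw [h.lintegral_eq_tsum'' f]
  exact lintegral_tsum fun g => (hf.comp (measurable_const_vadd g)).aemeasurable

def cubicLattice (ι : Type*) (R : ℝ) : AddSubgroup (ι → ℝ) :=
  AddSubgroup.pi Set.univ fun _ => AddSubgroup.zmultiples R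

namespace cubicLattice

variable {ι : Type*} {R : ℝ}

def point (R : ℝ) (j : ι → ℤ) : cubicLattice ι R :=
  ⟨fun i => j i • R, (AddSubgroup.mem_pi _).2 fun i _ => AddSubgroup.zsmul_mem_zmultiples R (j i)⟩

theorem point_surjective : Function.Surjective (point (ι := ι) R) := by
  rintro ⟨g, hg⟩
  choose j hj using fun i =>
    AddSubgroup.mem_zmultiples_iff.1 ((AddSubgroup.mem_pi _).1 hg i trivial)
  exact ⟨j, Subtype.ext (funext hj)⟩

theorem point_injective (hR : R ≠ 0) : Function.Injective (point (ι := ι) R) := fun j k h =>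
  funext fun i => by simpa [point, hR] using congrFun (congrArg Subtype.val h) i

instance [Finite ι] : Countable (cubicLattice ι R) := point_surjective.countable

theorem isAddFundamentalDomain [Countable ι] (hR : 0 < R) (μ : Measure (ι → ℝ)) :
    IsAddFundamentalDomain (cubicLattice ι R) (Set.univ.pi fun _ => Set.Ioc 0 R) μ := by
  refine .mk' (MeasurableSet.univ_pi fun _ => measurableSet_Ioc).nullMeasurableSet fun x => ?_
  choose j hj huniq using fun i => existsUnique_add_zsmul_mem_Ioc hR (x i) 0
  refine ⟨point R j, fun i _ => ?_, fun g hg => ?_⟩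
  · simpa [point, add_comm] using hj i
  · obtain ⟨k, rfl⟩ := point_surjective g
    congr 1
    funext i
    exact huniq i (k i) (by simpa [point, add_comm] using hg i trivial)

end cubicLattice

noncomputable def shiftedLatticeCount {ι : Type*} (R : ℝ) (B : Set (ι → ℝ)) (γ : ι → ℝ) :
    ℝ≥0∞ :=
  ∑' g : cubicLattice ι R, B.indicator 1 (g +ᵥ γ)

theorem measurable_shiftedLatticeCount {ι : Type*} [Finite ι] (R : ℝ) {B : Set (ι → ℝ)}
    (hB : MeasurableSet B) : Measurable (shiftedLatticeCount R B) :=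
  Measurable.tsum fun g => (measurable_one.indicator hB).comp (measurable_const_vadd g)

theorem setLIntegral_Icc_shiftedLatticeCount {ι : Type*} [Fintype ι] {R : ℝ}
    (hR : 0 < R) {B : Set (ι → ℝ)} (hB : MeasurableSet B) :
    ∫⁻ γ in Set.Icc 0 (fun _ => R), shiftedLatticeCount R B γ = volume B :=
  calc ∫⁻ γ in Set.Icc 0 (fun _ => R), shiftedLatticeCount R B γ
      = ∫⁻ γ in Set.univ.pi fun _ => Set.Ioc 0 R, shiftedLatticeCount R B γ :=
        (setLIntegral_congr Measure.univ_pi_Ioc_ae_eq_Icc).symm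
    _ = ∫⁻ γ, B.indicator 1 γ :=
        (cubicLattice.isAddFundamentalDomain hR volume).setLIntegral_tsum_vadd
          (measurable_one.indicator hB)
    _ = volume B := lintegral_indicator_one hB

def closeCornerBox {ι : Type*} (R x : ℝ) (s : ι → ℝ) : Set (ι → ℝ) :=
  Set.univ.pi fun i => Set.Ioc (s i - x - R) (s i + x)

theorem volume_closeCornerBox {ι : Type*} [Fintype ι] (R x : ℝ) (s : ι → ℝ) :
    volume (closeCornerBox R x s) = ENNReal.ofReal (2 * x + R) ^ Fintype.card ι := by
  have hlen : ∀ i, s i + x - (s i - x - R) = 2 * x + R := fun i => by ring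
  simp only [closeCornerBox, Real.volume_pi_Ioc, hlen, Finset.prod_const, Finset.card_univ]

theorem measurableSet_closeCornerBox {ι : Type*} [Countable ι] (R x : ℝ) (s : ι → ℝ) :
    MeasurableSet (closeCornerBox R x s) :=
  MeasurableSet.univ_pi fun _ => measurableSet_Ioc
theorem cubicLattice.point_vadd_mem_closeCornerBox {d : ℕ} {R x : ℝ} {γ : Fin d → ℝ}
    {j : Fin d → ℤ} {s y : Fin d → ℝ} (hy : y ∈ gridCell d R γ j) (hsy : ∀ i, |s i - y i| ≤ x) :
    point R j +ᵥ γ ∈ closeCornerBox R x s := fun i _ => by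
  have hcell := hy i
  have hclose := abs_le.1 (hsy i)
  simp only [point, Set.mem_Ioc, AddSubgroup.vadd_def, vadd_eq_add, Pi.add_apply, zsmul_eq_mul]
  constructor <;> linarith [hcell.1, hcell.2, hclose.1, hclose.2]

noncomputable def closeCornerCount (d : ℕ) (R : ℝ) (S : Finset (Fin d → ℝ)) (γ : Fin d → ℝ) :
    ℝ≥0∞ :=
  ∑ s ∈ S, shiftedLatticeCount R (closeCornerBox R (R / d) s) γ

theorem closeCellCount_le_closeCornerCount {d : ℕ} {R : ℝ} (hR : 0 < R) (S : Finset (Fin d → ℝ))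
    (γ : Fin d → ℝ) : (closeCellCount d R S γ : ℝ≥0∞) ≤ closeCornerCount d R S γ := by
  let B := fun s : Fin d → ℝ => closeCornerBox R (R / d) s
  have hcorner : ∀ j ∈ {j : Fin d → ℤ | ∃ s ∈ S, ∃ x ∈ gridCell d R γ j,
      ∑ i, (s i - x i)^2 ≤ R^2 / (d : ℝ)^2}, ∃ s ∈ S, cubicLattice.point R j +ᵥ γ ∈ B s := by
    rintro j ⟨s, hs, y, hy, hsy⟩
    refine ⟨s, hs, cubicLattice.point_vadd_mem_closeCornerBox hy
      (abs_sub_le_of_sum_sq_le (by positivity) ?_)⟩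
    rwa [div_pow]
  calc (closeCellCount d R S γ : ℝ≥0∞)
      ≤ ∑' j : Fin d → ℤ, ∑ s ∈ S, (B s).indicator 1 (cubicLattice.point R j +ᵥ γ) := by
        rw [closeCellCount]
        refine (Set.ncard_le_tsum_indicator_one _).trans (ENNReal.tsum_le_tsum fun j => ?_)
        refine Set.indicator_apply_le' (fun hj => ?_) fun _ => zero_le
        obtain ⟨s, hs, hmem⟩ := hcorner j hj
        calc (1 : (Fin d → ℤ) → ℝ≥0∞) j = (B s).indicator 1 (cubicLattice.point R j +ᵥ γ) :=
              (Set.indicator_of_mem hmem 1).symm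
          _ ≤ _ := Finset.single_le_sum (fun _ _ => zero_le) hs
                (f := fun s => (B s).indicator 1 (cubicLattice.point R j +ᵥ γ))
    _ = ∑ s ∈ S, ∑' j : Fin d → ℤ, (B s).indicator 1 (cubicLattice.point R j +ᵥ γ) :=
        Summable.tsum_finsetSum fun _ _ => ENNReal.summable
    _ ≤ closeCornerCount d R S γ := Finset.sum_le_sum fun s _ =>
        ENNReal.tsum_comp_le_tsum_of_injective (cubicLattice.point_injective hR.ne')
          fun g : cubicLattice (Fin d) R => (B s).indicator 1 (g +ᵥ γ)

theorem one_add_two_div_pow_le_nine (d : ℕ) : (1 + 2 / (d : ℝ)) ^ d ≤ 9 :=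
  calc (1 + 2 / (d : ℝ)) ^ d = (1 - (-2) / d) ^ d := by ring
    _ ≤ Real.exp 2 := by
        simpa using Real.one_sub_div_pow_le_exp_neg (n := d) (t := -2)
          (by linarith [d.cast_nonneg (α := ℝ)])
    _ = Real.exp 1 ^ 2 := by rw [← Real.exp_nat_mul]; norm_num
    _ ≤ 9 := by nlinarith [Real.exp_one_lt_three, Real.exp_pos 1]

theorem measurable_closeCornerCount (d : ℕ) (R : ℝ) (S : Finset (Fin d → ℝ)) :
    Measurable (closeCornerCount d R S) :=
  Finset.measurable_sum _ fun s _ =>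
    measurable_shiftedLatticeCount R (measurableSet_closeCornerBox _ _ s)

theorem setLIntegral_closeCornerCount_le {d : ℕ} {R : ℝ} (hR : 0 < R) (S : Finset (Fin d → ℝ)) :
    ∫⁻ γ in Set.Icc 0 (fun _ => R), closeCornerCount d R S γ
      ≤ ENNReal.ofReal (9 * S.card * R ^ d) := by
  have hbox : ∀ s ∈ S, ∫⁻ γ in Set.Icc 0 (fun _ => R),
      shiftedLatticeCount R (closeCornerBox R (R / d) s) γ
        = ENNReal.ofReal ((2 * (R / d) + R) ^ d) := fun s _ => by
    rw [setLIntegral_Icc_shiftedLatticeCount hR (measurableSet_closeCornerBox _ _ s),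
      volume_closeCornerBox, Fintype.card_fin, ENNReal.ofReal_pow (by positivity)]
  have hpow : (2 * (R / d) + R) ^ d ≤ 9 * R ^ d :=
    calc (2 * (R / d) + R) ^ d = (1 + 2 / (d : ℝ)) ^ d * R ^ d := by rw [← mul_pow]; ring
      _ ≤ 9 * R ^ d := by gcongr; exact one_add_two_div_pow_le_nine d
  simp only [closeCornerCount]
  rw [lintegral_finsetSum _ fun s _ =>
      measurable_shiftedLatticeCount R (measurableSet_closeCornerBox _ _ s),
    Finset.sum_congr rfl hbox, Finset.sum_const, nsmul_eq_mul, ← ENNReal.ofReal_natCast,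
    ← ENNReal.ofReal_mul (by positivity)]
  exact ENNReal.ofReal_le_ofReal
    ((mul_le_mul_of_nonneg_left hpow S.card.cast_nonneg).trans_eq (by ring))

theorem volume_closeCellCount_gt_le {d : ℕ} {R : ℝ} (hR : 0 < R) (S : Finset (Fin d → ℝ))
    {a : ℝ} (ha : 0 < a) :
    volume {γ : Fin d → ℝ | γ ∈ Set.Icc 0 (fun _ => R) ∧ a < (closeCellCount d R S γ : ℝ)}
      ≤ ENNReal.ofReal (9 * S.card * R ^ d) / ENNReal.ofReal a :=
  calc volume {γ : Fin d → ℝ | γ ∈ Set.Icc 0 (fun _ => R) ∧ a < (closeCellCount d R S γ : ℝ)}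
      ≤ volume.restrict (Set.Icc 0 fun _ => R)
          {γ | ENNReal.ofReal a ≤ closeCornerCount d R S γ} := by
        rw [Measure.restrict_apply' measurableSet_Icc]
        refine measure_mono fun γ ⟨hγ, hlt⟩ => ⟨?_, hγ⟩
        calc ENNReal.ofReal a ≤ ENNReal.ofReal (closeCellCount d R S γ) :=
              ENNReal.ofReal_le_ofReal hlt.le
          _ ≤ closeCornerCount d R S γ := by
              rw [ENNReal.ofReal_natCast]; exact closeCellCount_le_closeCornerCount hR S γ
    _ ≤ (∫⁻ γ in Set.Icc 0 (fun _ => R), closeCornerCount d R S γ) / ENNReal.ofReal a :=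
        meas_ge_le_lintegral_div (measurable_closeCornerCount d R S).aemeasurable
          (ENNReal.ofReal_pos.2 ha).ne' ENNReal.ofReal_ne_top
    _ ≤ ENNReal.ofReal (9 * S.card * R ^ d) / ENNReal.ofReal a := by
        gcongr; exact setLIntegral_closeCornerCount_le hR S

/-- With probability at least `1 - β` over a uniformly random shift in `[0,R]^d`,
the number of grid cells within squared distance `R²/d²` of `S` is `O(|S|/β)`. -/
theorem random_shift_close_cells :
    ∃ c : ℝ, 0 < c ∧
      ∀ (d : ℕ) (R : ℝ) (S : Finset (Fin d → ℝ)) (β : ℝ),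
        0 < d → 0 < R → β ∈ Set.Ioo (0:ℝ) 1 →
        volume {γ : Fin d → ℝ | γ ∈ Set.Icc 0 (fun _ => R) ∧
            c * (S.card : ℝ) / β < (closeCellCount d R S γ : ℝ)}
          ≤ ENNReal.ofReal (β * R ^ d) := by
  refine ⟨9, by norm_num, fun d R S β _ hR ⟨hβ, _⟩ => ?_⟩
  rcases S.eq_empty_or_nonempty with rfl | hS
  · simp [closeCellCount]
  have ha : 0 < 9 * (S.card : ℝ) / β := by have := hS.card_pos; positivity
  calc _ ≤ ENNReal.ofReal (9 * S.card * R ^ d) / ENNReal.ofReal (9 * S.card / β) :=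
        volume_closeCellCount_gt_le hR S ha
    _ = ENNReal.ofReal (β * R ^ d) := by
        rw [← ENNReal.ofReal_div_of_pos ha]
        congr 1
        field_simp
end

section
/- For a uniformly random grid of cells with side length R in ℝ^d, the expected number of cells within ℓ₂ distance x of a fixed point s (for 0 ≤ x < R/2) is at most (1 + 2x/R)^d. -/
open MeasureTheory ENNReal

/-!
Along each axis, a cell meeting the ball `B(s, x)` has index between `⌊(s i - x - γ i) / R⌋` and
`⌊(s i + x - γ i) / R⌋`, so the count is at most a product of one-dimensional counts and the
integral over the box of shifts factors. In one dimension the average is exact: substituting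
`v = u - t`, `∫₀ᴿ ⌊(u - t) / R⌋ dt` is the integral of `⌊v / R⌋` over a window of length `R` ending
at `u`, and the difference of two such windows ending at `a` and `b` is
`∫ₐᵇ (⌊v / R⌋ - ⌊(v - R) / R⌋) dv = b - a`. Hence each axis contributes `R + 2x`.
-/

theorem antitone_floor_sub_div {R : ℝ} (hR : 0 ≤ R) (c : ℝ) :
    Antitone fun t : ℝ => (⌊(c - t) / R⌋ : ℝ) := fun p q hpq => by
  dsimp only; gcongr

theorem intervalIntegrable_floor_sub_floor {R : ℝ} (hR : 0 ≤ R) (a b u v : ℝ) :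
    IntervalIntegrable (fun t => (⌊(b - t) / R⌋ : ℝ) - ⌊(a - t) / R⌋) volume u v :=
  (antitone_floor_sub_div hR b).intervalIntegrable.sub
    (antitone_floor_sub_div hR a).intervalIntegrable

open intervalIntegral in
theorem integral_floor_sub_floor {R : ℝ} (hR : 0 < R) (a b : ℝ) :
    ∫ t in 0..R, ((⌊(b - t) / R⌋ : ℝ) - ⌊(a - t) / R⌋) = b - a := by
  set g : ℝ → ℝ := fun v => ⌊v / R⌋
  have hg : Monotone g := fun p q hpq => by
    simp only [g]; gcongr
  have hint : ∀ u v, IntervalIntegrable g volume u v := fun _ _ => hg.intervalIntegrable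
  have hshift : ∀ v, g v - g (v - R) = 1 := fun v => by
    simp only [g, sub_div, div_self hR.ne', Int.floor_sub_one]; push_cast; ring
  calc ∫ t in 0..R, (g (b - t) - g (a - t))
      = (∫ v in b - R..b, g v) - ∫ v in a - R..a, g v := by
        rw [intervalIntegral.integral_sub (antitone_floor_sub_div hR.le b).intervalIntegrable
          (antitone_floor_sub_div hR.le a).intervalIntegrable, integral_comp_sub_left g,
          integral_comp_sub_left g, sub_zero, sub_zero]
    _ = (∫ v in a..b, g v) - ∫ v in a - R..b - R, g v := by
        rw [integral_interval_sub_interval_comm' (hint _ _) (hint _ _) (hint _ _)]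
    _ = ∫ v in a..b, (g v - g (v - R)) := by
        have hint_shift : IntervalIntegrable (fun v => g (v - R)) volume a b :=
          (hg.comp fun _ _ h => sub_le_sub_right h R).intervalIntegrable
        rw [intervalIntegral.integral_sub (hint a b) hint_shift, integral_comp_sub_right]
    _ = b - a := by simp [hshift]

theorem floor_div_eq_of_mem_gridCell {d : ℕ} {R : ℝ} {γ y : Fin d → ℝ} {j : Fin d → ℤ}
    (hR : 0 < R) (hy : y ∈ gridCell d R γ j) (i : Fin d) : ⌊(y i - γ i) / R⌋ = j i := by
  obtain ⟨hlo, hhi⟩ := hy i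
  rw [Int.floor_eq_iff, le_div_iff₀ hR, div_lt_iff₀ hR]
  constructor <;> linarith

theorem closeCells_subset_Icc {d : ℕ} {R x : ℝ} (hR : 0 < R) (hx0 : 0 ≤ x) (s γ : Fin d → ℝ) :
    {j : Fin d → ℤ | ∃ y ∈ gridCell d R γ j, ∑ i, (s i - y i) ^ 2 ≤ x ^ 2} ⊆
      Finset.Icc (fun i => ⌊(s i - x - γ i) / R⌋) (fun i => ⌊(s i + x - γ i) / R⌋) := by
  rintro j ⟨y, hy, hdist⟩
  have hcoord : ∀ i, |s i - y i| ≤ x := fun i =>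
    abs_le_of_sq_le_sq ((Finset.single_le_sum (fun i _ => sq_nonneg (s i - y i))
      (Finset.mem_univ i)).trans hdist) hx0
  simp only [Finset.coe_Icc, Set.mem_Icc]
  refine ⟨fun i => ?_, fun i => ?_⟩ <;> dsimp only <;>
    rw [← floor_div_eq_of_mem_gridCell hR hy i] <;> gcongr <;> linarith [abs_le.1 (hcoord i)]

theorem ncard_closeCells_le {d : ℕ} {R x : ℝ} (hR : 0 < R) (hx0 : 0 ≤ x) (s γ : Fin d → ℝ) :
    ({j : Fin d → ℤ | ∃ y ∈ gridCell d R γ j, ∑ i, (s i - y i) ^ 2 ≤ x ^ 2}.ncard : ℝ) ≤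
      ∏ i, ((⌊(s i + x - γ i) / R⌋ : ℝ) - ⌊(s i - x - γ i) / R⌋ + 1) := by
  have hle : ∀ i, ⌊(s i - x - γ i) / R⌋ ≤ ⌊(s i + x - γ i) / R⌋ := fun i => by
    gcongr; linarith
  calc _ ≤ ((Finset.Icc (fun i => ⌊(s i - x - γ i) / R⌋)
          (fun i => ⌊(s i + x - γ i) / R⌋)).card : ℝ) := by
        exact_mod_cast (Set.ncard_le_ncard (closeCells_subset_Icc hR hx0 s γ)
          (Finset.finite_toSet _)).trans (Set.ncard_coe_finset _).le
    _ = _ := by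
        rw [Pi.card_Icc]
        push_cast
        refine Finset.prod_congr rfl fun i _ => ?_
        rw [Int.card_Icc, ← Int.cast_natCast, Int.toNat_of_nonneg (by linarith [hle i])]
        push_cast; ring

theorem integrableOn_floor_sub_floor_add_one {R : ℝ} (hR : 0 ≤ R) (a b : ℝ) :
    IntegrableOn (fun t => (⌊(b - t) / R⌋ : ℝ) - ⌊(a - t) / R⌋ + 1) (Set.Icc 0 R) :=
  (intervalIntegrable_iff_integrableOn_Icc_of_le hR).1
    ((intervalIntegrable_floor_sub_floor hR a b 0 R).add intervalIntegrable_const)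

theorem setIntegral_floor_sub_floor_add_one {R : ℝ} (hR : 0 < R) (a b : ℝ) :
    ∫ t in Set.Icc 0 R, ((⌊(b - t) / R⌋ : ℝ) - ⌊(a - t) / R⌋ + 1) = b - a + R := by
  rw [integral_Icc_eq_integral_Ioc, ← intervalIntegral.integral_of_le hR.le,
    intervalIntegral.integral_add (intervalIntegrable_floor_sub_floor hR.le a b 0 R)
      intervalIntegrable_const, integral_floor_sub_floor hR, intervalIntegral.integral_const,
    smul_eq_mul, mul_one, sub_zero]

theorem expected_close_cells_general (d : ℕ) (R x : ℝ) (s : Fin d → ℝ)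
    (hR : 0 < R) (hx0 : 0 ≤ x) :
    ∫⁻ γ in Set.Icc (0 : Fin d → ℝ) (fun _ => R),
        (({j : Fin d → ℤ | ∃ y ∈ gridCell d R γ j,
            ∑ i, (s i - y i)^2 ≤ x^2}.ncard : ℝ≥0∞))
      ≤ ENNReal.ofReal ((1 + 2 * x / R) ^ d * R ^ d) := by
  set c : Fin d → ℝ → ℝ := fun i t => (⌊(s i + x - t) / R⌋ : ℝ) - ⌊(s i - x - t) / R⌋ + 1
  have hbox : volume.restrict (Set.Icc (0 : Fin d → ℝ) fun _ => R) =
      Measure.pi fun _ => volume.restrict (Set.Icc 0 R) := by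
    rw [← Set.pi_univ_Icc, volume_pi, Measure.restrict_pi_pi]
    rfl
  have hc_nonneg : ∀ i t, 0 ≤ c i t := fun i t => by
    have : ⌊(s i - x - t) / R⌋ ≤ ⌊(s i + x - t) / R⌋ := by gcongr; linarith
    simp only [c]; linarith [(Int.cast_le (R := ℝ)).2 this]
  calc _ ≤ ∫⁻ γ in Set.Icc (0 : Fin d → ℝ) (fun _ => R), ENNReal.ofReal (∏ i, c i (γ i)) :=
        lintegral_mono fun γ => by
          rw [← ENNReal.ofReal_natCast]
          exact ENNReal.ofReal_le_ofReal (ncard_closeCells_le hR hx0 s γ)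
    _ = ENNReal.ofReal (∫ γ in Set.Icc (0 : Fin d → ℝ) (fun _ => R), ∏ i, c i (γ i)) := by
        rw [hbox, ofReal_integral_eq_lintegral_ofReal
          (Integrable.fintype_prod fun i => integrableOn_floor_sub_floor_add_one hR.le _ _)
          (ae_of_all _ fun γ => Finset.prod_nonneg fun i _ => hc_nonneg i (γ i))]
    _ = ENNReal.ofReal ((1 + 2 * x / R) ^ d * R ^ d) := by
        rw [hbox, integral_fintype_prod_eq_prod]
        have hside : ∀ i, s i + x - (s i - x) + R = (1 + 2 * x / R) * R := fun i => by
          field_simp; ring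
        simp only [c, setIntegral_floor_sub_floor_add_one hR, hside, Finset.prod_const,
          Finset.card_univ, Fintype.card_fin, mul_pow]

/-- For a uniformly random shift in `[0,R]^d`, the expected number of cells within
ℓ₂ distance `x` of a fixed point `s` (for `0 ≤ x < R/2`) is at most `(1 + 2x/R)^d`. -/
theorem expected_close_cells (d : ℕ) (R x : ℝ) (s : Fin d → ℝ)
    (hd : 0 < d) (hR : 0 < R) (hx0 : 0 ≤ x) (hx : x < R / 2) :
    ∫⁻ γ in Set.Icc (0 : Fin d → ℝ) (fun _ => R),
        (({j : Fin d → ℤ | ∃ y ∈ gridCell d R γ j,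
            ∑ i, (s i - y i)^2 ≤ x^2}.ncard : ℝ≥0∞))
      ≤ ENNReal.ofReal ((1 + 2 * x / R) ^ d * R ^ d) :=
  expected_close_cells_general d R x s hR hx0
end

section
/- Let C ⊆ D ⊆ ℝ^d where C has diameter at most r and D has diameter at most Δ. Fix x₀ ∈ C, and suppose the set of points colliding with x₀ under a hash function H is partitioned into N' = {y : H(y)=H(x₀), ‖y−x₀‖ < cr} and F = {y : H(y)=H(x₀), ‖y−x₀‖ ≥ cr}. If |N'| ≥ (p/2)|C| and |F| ≤ (4q/p)|D|, then the average x̂₀ of all points colliding with x₀ satisfies ‖x₀ − x̂₀‖ ≤ cr + (8q|D|)/(p²|C|)·Δ. -/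
/-! Write `x₀ - x̂₀` as the weighted average of the displacements `x₀ - y` over the colliding
points. Near points contribute at most `cr` each and false positives at most `Δ` each, so
`‖x₀ - x̂₀‖ ≤ (|N'|·cr + |F|·Δ)/(|N'| + |F|)`. The size bounds give
`|F|·Δ ≤ (4q/p)|D|Δ = (p/2)|C|·B ≤ |N'|·B` with `B = 8q|D|Δ/(p²|C|)`, so the false positives
shift the average by at most `B`. -/

open Finset

section Centroid

variable {E : Type*} [SeminormedAddCommGroup E] [NormedSpace ℝ E]

lemma norm_card_smul_sub_sum_le (s : Finset E) (x : E) {a : ℝ}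
    (h : ∀ y ∈ s, dist y x ≤ a) : ‖(#s : ℝ) • x - ∑ y ∈ s, y‖ ≤ #s * a := by
  rw [Nat.cast_smul_eq_nsmul, ← sum_const, ← sum_sub_distrib]
  calc ‖∑ y ∈ s, (x - y)‖ ≤ ∑ _y ∈ s, a :=
        norm_sum_le_of_le s fun y hy => by rw [← dist_eq_norm, dist_comm]; exact h y hy
    _ = #s * a := by rw [sum_const, nsmul_eq_mul]

lemma dist_average_union_le (s t : Finset E) (x : E) {a b : ℝ}
    (hs : ∀ y ∈ s, dist y x ≤ a) (ht : ∀ y ∈ t, dist y x ≤ b) (hst : 0 < (#s + #t : ℝ)) :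
    dist x ((#s + #t : ℝ)⁻¹ • ((∑ y ∈ s, y) + ∑ y ∈ t, y)) ≤
      (#s * a + #t * b) / (#s + #t) := by
  have hsplit : x - (#s + #t : ℝ)⁻¹ • ((∑ y ∈ s, y) + ∑ y ∈ t, y) =
      (#s + #t : ℝ)⁻¹ • (((#s : ℝ) • x - ∑ y ∈ s, y) + ((#t : ℝ) • x - ∑ y ∈ t, y)) := by
    rw [← add_sub_add_comm, ← add_smul, smul_sub, smul_smul, inv_mul_cancel₀ hst.ne', one_smul]
  rw [dist_eq_norm, hsplit, norm_smul, Real.norm_of_nonneg (inv_nonneg.2 hst.le),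
    inv_mul_eq_div]
  gcongr
  exact (norm_add_le _ _).trans
    (add_le_add (norm_card_smul_sub_sum_le s x hs) (norm_card_smul_sub_sum_le t x ht))

end Centroid

lemma weighted_average_le_add {n f a b B : ℝ} (hn : 0 < n) (hf : 0 ≤ f) (ha : 0 ≤ a)
    (hB : 0 ≤ B) (hfb : f * b ≤ n * B) : (n * a + f * b) / (n + f) ≤ a + B := by
  rw [div_le_iff₀ (by positivity)]
  nlinarith [mul_nonneg hf ha, mul_nonneg hf hB]

theorem lsh_bucket_average_general (d : ℕ)
    (D C N' F : Finset (EuclideanSpace ℝ (Fin d)))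
    (hCD : C ⊆ D) (hFD : F ⊆ D)
    (hC : C.Nonempty)
    (x₀ : EuclideanSpace ℝ (Fin d)) (hx₀ : x₀ ∈ C)
    (p q r c Δ : ℝ) (hp0 : 0 < p) (hq : 0 < q)
    (hc : 1 < c) (hr : 0 < r) (hΔ : 0 ≤ Δ)
    (hDdiam : ∀ u ∈ D, ∀ v ∈ D, dist u v ≤ Δ)
    (hNnear : ∀ y ∈ N', dist y x₀ < c * r)
    (hNcard : (p / 2) * (C.card : ℝ) ≤ (N'.card : ℝ))
    (hFcard : (F.card : ℝ) ≤ (4 * q / p) * (D.card : ℝ))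
    (xhat : EuclideanSpace ℝ (Fin d))
    (hxhat : xhat = ((N'.card : ℝ) + (F.card : ℝ))⁻¹ •
      ((∑ y ∈ N', y) + (∑ y ∈ F, y))) :
    dist x₀ xhat ≤ c * r + (8 * q * (D.card : ℝ)) / (p^2 * (C.card : ℝ)) * Δ := by
  set B := (8 * q * (D.card : ℝ)) / (p^2 * (C.card : ℝ)) * Δ
  have hCpos : (0 : ℝ) < #C := by exact_mod_cast hC.card_pos
  have hNpos : (0 : ℝ) < #N' := lt_of_lt_of_le (by positivity) hNcard
  have hFΔ : ∀ y ∈ F, dist y x₀ ≤ Δ := fun y hy => hDdiam y (hFD hy) x₀ (hCD hx₀)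
  have hfalse : #F * Δ ≤ #N' * B :=
    calc (#F : ℝ) * Δ ≤ (4 * q / p) * #D * Δ := by gcongr
      _ = (p / 2) * #C * B := by simp only [B]; field_simp; ring
      _ ≤ #N' * B := by gcongr
  rw [hxhat]
  calc _ ≤ (#N' * (c * r) + #F * Δ) / (#N' + #F) :=
        dist_average_union_le N' F x₀ (fun y hy => (hNnear y hy).le) hFΔ (by positivity)
    _ ≤ c * r + B :=
        weighted_average_le_add hNpos (by positivity) (by positivity) (by positivity) hfalse

/-- Bucket-average guarantee: the average over colliding points (near points `N'` together
with false positives `F`) lies within `cr + (8q|D|)/(p²|C|)·Δ` of `x₀`. -/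
theorem lsh_bucket_average (d : ℕ)
    (D C N' F : Finset (EuclideanSpace ℝ (Fin d)))
    (hCD : C ⊆ D) (hN'D : N' ⊆ D) (hFD : F ⊆ D)
    (hC : C.Nonempty)
    (x₀ : EuclideanSpace ℝ (Fin d)) (hx₀ : x₀ ∈ C)
    (p q r c Δ : ℝ) (hp : p ≤ 1) (hp0 : 0 < p) (hq : 0 < q) (hqp : q < p)
    (hc : 1 < c) (hr : 0 < r) (hΔ : 0 ≤ Δ)
    (hDdiam : ∀ u ∈ D, ∀ v ∈ D, dist u v ≤ Δ)
    (hCdiam : ∀ u ∈ C, ∀ v ∈ C, dist u v ≤ r)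
    (hNnear : ∀ y ∈ N', dist y x₀ < c * r)
    (hFfar : ∀ y ∈ F, c * r ≤ dist y x₀)
    (hNcard : (p / 2) * (C.card : ℝ) ≤ (N'.card : ℝ))
    (hFcard : (F.card : ℝ) ≤ (4 * q / p) * (D.card : ℝ))
    (xhat : EuclideanSpace ℝ (Fin d))
    (hxhat : xhat = ((N'.card : ℝ) + (F.card : ℝ))⁻¹ •
      ((∑ y ∈ N', y) + (∑ y ∈ F, y))) :
    dist x₀ xhat ≤ c * r + (8 * q * (D.card : ℝ)) / (p^2 * (C.card : ℝ)) * Δ :=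
  lsh_bucket_average_general d D C N' F hCD hFD hC x₀ hx₀ p q r c Δ hp0 hq hc hr hΔ hDdiam hNnear
    hNcard hFcard xhat hxhat
end

section
/- Let D and D* be finite multisets in ℝ^d, S a finite set, and suppose D* consists of each s ∈ S repeated n̂_s times where |n̂_s − |D(s)|| ≤ E for all s, with D(s) = {p ∈ D : s = argmin_{s'∈S} ‖p−s'‖²}. Then for any finite set S₁ ⊆ ℝ^d, f_{D*}(S₁) ≤ 2·f_D(S) + 2·f_D(S₁) + E·|S|·Δ² and f_D(S₁) ≤ 2·f_D(S) + 2·f_{D*}(S₁) + E·|S|·Δ², where Δ bounds the diameter of the domain containing all points. -/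
/-!
Assign every point `p ∈ D` to its nearest candidate center `a p ∈ S`. By the weak triangle
inequality `‖p - r‖² ≤ 2‖p - q‖² + 2‖q - r‖²` through `a p`, moving each point of `D` onto its
center (or back) changes its squared distance to `S₁` by at most twice its squared distance to
`S`. Summed over a cluster `D(s)`, the proxy data set differs from `D` only in the multiplicity
of `s`, which is off by at most `E`; each missing or extra copy contributes at most `Δ²`.
-/

open Finset

theorem mul_le_mul_add_mul_of_abs_sub_le {x y E m M : ℝ} (hxy : |x - y| ≤ E)
    (hm : 0 ≤ m) (hmM : m ≤ M) : x * m ≤ y * m + E * M := by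
  have hE : 0 ≤ E := (abs_nonneg _).trans hxy
  nlinarith [le_of_abs_le hxy, mul_le_mul_of_nonneg_left hmM hE]

section ProxyCost

variable {α : Type*} [PseudoMetricSpace α]

theorem sq_dist_le_two_mul_add (x y z : α) :
    dist x z ^ 2 ≤ 2 * dist x y ^ 2 + 2 * dist y z ^ 2 := by
  calc dist x z ^ 2 ≤ (dist x y + dist y z) ^ 2 :=
        pow_le_pow_left₀ dist_nonneg (dist_triangle x y z) 2
    _ ≤ 2 * dist x y ^ 2 + 2 * dist y z ^ 2 := by
        linarith [add_sq_le (a := dist x y) (b := dist y z)]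

noncomputable def infSqDist (T : Finset α) (hT : T.Nonempty) (x : α) : ℝ :=
  T.inf' hT fun t => dist x t ^ 2

variable {T : Finset α} (hT : T.Nonempty)

theorem infSqDist_nonneg (x : α) : 0 ≤ infSqDist T hT x :=
  le_inf' hT _ fun _ _ => sq_nonneg _

theorem infSqDist_le_sq_dist {x t : α} (ht : t ∈ T) : infSqDist T hT x ≤ dist x t ^ 2 :=
  inf'_le _ ht

theorem infSqDist_le_sq {x t : α} {Δ : ℝ} (ht : t ∈ T) (h : dist x t ≤ Δ) :
    infSqDist T hT x ≤ Δ ^ 2 :=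
  (infSqDist_le_sq_dist hT ht).trans (pow_le_pow_left₀ dist_nonneg h 2)

theorem infSqDist_eq_sq_dist_of_forall_le {x s : α} (hs : s ∈ T)
    (h : ∀ t ∈ T, dist x s ≤ dist x t) : infSqDist T hT x = dist x s ^ 2 :=
  le_antisymm (infSqDist_le_sq_dist hT hs)
    (le_inf' hT _ fun t ht => pow_le_pow_left₀ dist_nonneg (h t ht) 2)

theorem infSqDist_le_two_mul_add (x y : α) :
    infSqDist T hT x ≤ 2 * dist x y ^ 2 + 2 * infSqDist T hT y := by
  obtain ⟨t, ht, hyt⟩ := T.exists_mem_eq_inf' hT fun t => dist y t ^ 2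
  calc infSqDist T hT x ≤ dist x t ^ 2 := infSqDist_le_sq_dist hT ht
    _ ≤ 2 * dist x y ^ 2 + 2 * dist y t ^ 2 := sq_dist_le_two_mul_add x y t
    _ = 2 * dist x y ^ 2 + 2 * infSqDist T hT y := by rw [infSqDist, hyt]

variable {E Δ : ℝ}

theorem sum_infSqDist_le_of_abs_card_sub_le {F : Finset α} {s : α} {n : ℕ}
    (hcount : |(F.card : ℝ) - n| ≤ E) (hF : ∀ p ∈ F, infSqDist T hT p ≤ Δ ^ 2) :
    ∑ p ∈ F, infSqDist T hT p ≤
      2 * ∑ p ∈ F, dist p s ^ 2 + 2 * (n * infSqDist T hT s) + E * Δ ^ 2 := by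
  set m := min (Δ ^ 2) (2 * infSqDist T hT s)
  have hm : 0 ≤ m := le_min (sq_nonneg Δ) (by linarith [infSqDist_nonneg hT s])
  -- capping by `Δ²` is what keeps the error term at `E Δ²` rather than `2 E Δ²`
  have hpoint : ∀ p ∈ F, infSqDist T hT p ≤ 2 * dist p s ^ 2 + m := by
    intro p hp
    have := infSqDist_le_two_mul_add hT p s
    rcases min_choice (Δ ^ 2) (2 * infSqDist T hT s) with hmin | hmin <;>
      · rw [show m = _ from hmin]; nlinarith [hF p hp, sq_nonneg (dist p s)]
  calc ∑ p ∈ F, infSqDist T hT p ≤ ∑ p ∈ F, (2 * dist p s ^ 2 + m) := sum_le_sum hpoint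
    _ = 2 * ∑ p ∈ F, dist p s ^ 2 + F.card * m := by
        rw [sum_add_distrib, sum_const, nsmul_eq_mul, mul_sum]
    _ ≤ 2 * ∑ p ∈ F, dist p s ^ 2 + (n * m + E * Δ ^ 2) := by
        gcongr
        exact mul_le_mul_add_mul_of_abs_sub_le hcount hm (min_le_left _ _)
    _ ≤ 2 * ∑ p ∈ F, dist p s ^ 2 + 2 * (n * infSqDist T hT s) + E * Δ ^ 2 := by
        nlinarith [mul_le_mul_of_nonneg_left (min_le_right (Δ ^ 2) (2 * infSqDist T hT s))
          (Nat.cast_nonneg (α := ℝ) n)]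

variable [DecidableEq α] {D S : Finset α} {a : α → α} {n : α → ℕ}

theorem sum_mul_infSqDist_le (ha : ∀ p ∈ D, a p ∈ S)
    (hcount : ∀ s ∈ S, |(n s : ℝ) - #{p ∈ D | a p = s}| ≤ E)
    (hΔ : ∀ s ∈ S, infSqDist T hT s ≤ Δ ^ 2) :
    ∑ s ∈ S, n s * infSqDist T hT s ≤
      2 * ∑ p ∈ D, dist p (a p) ^ 2 + 2 * ∑ p ∈ D, infSqDist T hT p + E * S.card * Δ ^ 2 := by
  have hfiber : ∑ s ∈ S, (#{p ∈ D | a p = s} : ℝ) * infSqDist T hT s =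
      ∑ p ∈ D, infSqDist T hT (a p) := by
    rw [← sum_fiberwise_of_maps_to' ha]
    simp only [sum_const, nsmul_eq_mul]
  calc ∑ s ∈ S, n s * infSqDist T hT s
      ≤ ∑ s ∈ S, ((#{p ∈ D | a p = s} : ℝ) * infSqDist T hT s + E * Δ ^ 2) :=
        sum_le_sum fun s hs =>
          mul_le_mul_add_mul_of_abs_sub_le (hcount s hs) (infSqDist_nonneg hT s) (hΔ s hs)
    _ = ∑ p ∈ D, infSqDist T hT (a p) + E * S.card * Δ ^ 2 := by
        rw [sum_add_distrib, hfiber, sum_const, nsmul_eq_mul]; ring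
    _ ≤ ∑ p ∈ D, (2 * dist p (a p) ^ 2 + 2 * infSqDist T hT p) + E * S.card * Δ ^ 2 := by
        gcongr with p
        rw [dist_comm]
        exact infSqDist_le_two_mul_add hT (a p) p
    _ = _ := by rw [sum_add_distrib, mul_sum, mul_sum]

theorem sum_infSqDist_le (ha : ∀ p ∈ D, a p ∈ S)
    (hcount : ∀ s ∈ S, |(n s : ℝ) - #{p ∈ D | a p = s}| ≤ E)
    (hΔ : ∀ p ∈ D, infSqDist T hT p ≤ Δ ^ 2) :
    ∑ p ∈ D, infSqDist T hT p ≤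
      2 * ∑ p ∈ D, dist p (a p) ^ 2 + 2 * ∑ s ∈ S, n s * infSqDist T hT s +
        E * S.card * Δ ^ 2 := by
  have hcluster : ∀ s ∈ S, ∑ p ∈ D with a p = s, infSqDist T hT p ≤
      2 * ∑ p ∈ D with a p = s, dist p (a p) ^ 2 + 2 * (n s * infSqDist T hT s) + E * Δ ^ 2 := by
    intro s hs
    have hdist : ∑ p ∈ D with a p = s, dist p (a p) ^ 2 = ∑ p ∈ D with a p = s, dist p s ^ 2 :=
      sum_congr rfl fun p hp => by rw [(mem_filter.1 hp).2]
    rw [hdist]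
    exact sum_infSqDist_le_of_abs_card_sub_le hT ((abs_sub_comm _ _).trans_le (hcount s hs))
      fun p hp => hΔ p (mem_filter.1 hp).1
  calc ∑ p ∈ D, infSqDist T hT p
      = ∑ s ∈ S, ∑ p ∈ D with a p = s, infSqDist T hT p := (sum_fiberwise_of_maps_to ha _).symm
    _ ≤ ∑ s ∈ S, (2 * ∑ p ∈ D with a p = s, dist p (a p) ^ 2 +
          2 * (n s * infSqDist T hT s) + E * Δ ^ 2) := sum_le_sum hcluster
    _ = _ := by
        rw [sum_add_distrib, sum_add_distrib, ← mul_sum, ← mul_sum,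
          sum_fiberwise_of_maps_to ha, sum_const, nsmul_eq_mul]
        ring

end ProxyCost

open Classical in
theorem proxy_dataset_cost_general (d : ℕ)
    (D : Finset (EuclideanSpace ℝ (Fin d)))
    (S S₁ : Finset (EuclideanSpace ℝ (Fin d)))
    (hS : S.Nonempty) (hS₁ : S₁.Nonempty)
    (a : EuclideanSpace ℝ (Fin d) → EuclideanSpace ℝ (Fin d))
    (ha : ∀ p ∈ D, a p ∈ S)
    (hamin : ∀ p ∈ D, ∀ s ∈ S, dist p (a p) ≤ dist p s)
    (nhat : EuclideanSpace ℝ (Fin d) → ℕ)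
    (E Δ : ℝ)
    (hdiam : ∀ x ∈ (D : Set (EuclideanSpace ℝ (Fin d))) ∪ S ∪ S₁,
      ∀ y ∈ (D : Set (EuclideanSpace ℝ (Fin d))) ∪ S ∪ S₁, dist x y ≤ Δ)
    (hcount : ∀ s ∈ S,
      |(nhat s : ℝ) - ((D.filter (fun p => a p = s)).card : ℝ)| ≤ E)
    (fD : Finset (EuclideanSpace ℝ (Fin d)) → ℝ)
    (hfD : ∀ (T : Finset (EuclideanSpace ℝ (Fin d))) (hT : T.Nonempty),
      fD T = ∑ p ∈ D, T.inf' hT (fun s => dist p s ^ 2))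
    (fDstar : ℝ)
    (hfDstar : fDstar = ∑ s ∈ S, (nhat s : ℝ) * S₁.inf' hS₁ (fun s₁ => dist s s₁ ^ 2)) :
    fDstar ≤ 2 * fD S + 2 * fD S₁ + E * (S.card : ℝ) * Δ^2
    ∧ fD S₁ ≤ 2 * fD S + 2 * fDstar + E * (S.card : ℝ) * Δ^2 := by
  have hfDS : fD S = ∑ p ∈ D, dist p (a p) ^ 2 := by
    rw [hfD S hS]
    exact sum_congr rfl fun p hp => infSqDist_eq_sq_dist_of_forall_le hS (ha p hp) (hamin p hp)
  have hbound : ∀ x ∈ (D : Set (EuclideanSpace ℝ (Fin d))) ∪ S ∪ S₁,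
      infSqDist S₁ hS₁ x ≤ Δ ^ 2 := fun x hx =>
    let ⟨t, ht⟩ := hS₁
    infSqDist_le_sq hS₁ ht (hdiam x hx t (Or.inr ht))
  rw [hfDS, hfD S₁ hS₁, hfDstar]
  exact ⟨sum_mul_infSqDist_le hS₁ ha hcount fun s hs => hbound s (Or.inl (Or.inr hs)),
    sum_infSqDist_le hS₁ ha hcount fun p hp => hbound p (Or.inl (Or.inl hp))⟩

open Classical in
/-- The k-means cost functions of the data set `D` and the proxy data set `D*`
(each candidate center `s ∈ S` repeated `n̂ s` times, where `n̂ s` estimates the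
size of the cluster of `D` assigned to `s` within error `E`) are close. -/
theorem proxy_dataset_cost (d : ℕ)
    (D : Finset (EuclideanSpace ℝ (Fin d)))
    (S S₁ : Finset (EuclideanSpace ℝ (Fin d)))
    (hS : S.Nonempty) (hS₁ : S₁.Nonempty)
    (a : EuclideanSpace ℝ (Fin d) → EuclideanSpace ℝ (Fin d))
    (ha : ∀ p ∈ D, a p ∈ S)
    (hamin : ∀ p ∈ D, ∀ s ∈ S, dist p (a p) ≤ dist p s)
    (nhat : EuclideanSpace ℝ (Fin d) → ℕ)
    (E Δ : ℝ) (hE : 0 ≤ E) (hΔ : 0 ≤ Δ)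
    (hdiam : ∀ x ∈ (D : Set (EuclideanSpace ℝ (Fin d))) ∪ S ∪ S₁,
      ∀ y ∈ (D : Set (EuclideanSpace ℝ (Fin d))) ∪ S ∪ S₁, dist x y ≤ Δ)
    (hcount : ∀ s ∈ S,
      |(nhat s : ℝ) - ((D.filter (fun p => a p = s)).card : ℝ)| ≤ E)
    (fD : Finset (EuclideanSpace ℝ (Fin d)) → ℝ)
    (hfD : ∀ (T : Finset (EuclideanSpace ℝ (Fin d))) (hT : T.Nonempty),
      fD T = ∑ p ∈ D, T.inf' hT (fun s => dist p s ^ 2))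
    (fDstar : ℝ)
    (hfDstar : fDstar = ∑ s ∈ S, (nhat s : ℝ) * S₁.inf' hS₁ (fun s₁ => dist s s₁ ^ 2)) :
    fDstar ≤ 2 * fD S + 2 * fD S₁ + E * (S.card : ℝ) * Δ^2
    ∧ fD S₁ ≤ 2 * fD S + 2 * fDstar + E * (S.card : ℝ) * Δ^2 :=
  proxy_dataset_cost_general d D S S₁ hS hS₁ a ha hamin nhat E Δ hdiam hcount fD hfD fDstar hfDstar
end

section
/- Suppose for each l = 1,…,L the inequality |a_l| ≥ (1−α)(A_l − O_{l+1}) − err holds, where A_l = ∑_{j≥l}|a_j|, O_l = ∑_{j≥l}|o_j|, the thresholds satisfy r_{l+1} = 2r_l for l ≥ 1 with r_0 = 0, α ∈ (0, c₀) for a sufficiently small constant c₀, and err ≥ 0. Then ∑_{l=1}^L |a_l|·r_l ≤ (1 + O(α))·∑_{l=1}^L |o_l|·r_l + O(err·r_L). -/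
/-!
Write `A_l`, `O_l` for the tail sums `∑_{j ≥ l} |a_j|`, `∑_{j ≥ l} |o_j|`. Summation by parts turns
`∑ |a_l| r_l` into `∑ A_l (r_l - r_{l-1})`, and likewise for `o`. The greedy guarantee at level `l`
rearranges to `A_{l+1} ≤ α A_l + O_{l+1} + err`, and `A_1 = O_1`. Since the increments
`r_l - r_{l-1}` of a doubling sequence at most double from one level to the next and add up to at
most `r_L`, weighting the recurrence by them gives `S_a ≤ S_o + 2α S_a + err r_L` for the two
weighted sums, which for `α ≤ 1/4` solves to `S_a ≤ (1 + 4α) S_o + 4 err r_L`.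
-/

open Finset

namespace GreedyCoverage

def backwardDiff (r : ℕ → ℝ) (l : ℕ) : ℝ := r l - r (l - 1)

theorem sum_Icc_one_eq_add_sum_Ico_succ {M : Type*} [AddCommMonoid M] {L : ℕ} (hL : 1 ≤ L)
    (F : ℕ → M) : ∑ l ∈ Icc 1 L, F l = F 1 + ∑ l ∈ Ico 1 L, F (l + 1) := by
  rw [sum_Ico_add', ← Ico_add_one_right_eq_Icc, sum_eq_sum_Ico_succ_bot (by omega)]

theorem sum_Icc_backwardDiff {r : ℕ → ℝ} (n : ℕ) :
    ∑ l ∈ Icc 1 n, backwardDiff r l = r n - r 0 := by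
  rw [← Ico_add_one_right_eq_Icc, ← zero_add 1, ← sum_Ico_add', sum_Ico_eq_sum_range]
  simpa [backwardDiff, add_comm] using sum_range_sub r n

theorem sum_Icc_mul_eq_sum_tail_mul_backwardDiff {r : ℕ → ℝ} (hr0 : r 0 = 0) (L : ℕ)
    (f : ℕ → ℝ) :
    ∑ l ∈ Icc 1 L, f l * r l = ∑ l ∈ Icc 1 L, (∑ j ∈ Icc l L, f j) * backwardDiff r l := by
  have hswap : ∑ l ∈ Icc 1 L, (∑ j ∈ Icc l L, f j) * backwardDiff r l
      = ∑ j ∈ Icc 1 L, f j * ∑ l ∈ Icc 1 j, backwardDiff r l := by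
    simp_rw [sum_mul, mul_sum]
    exact sum_comm' fun l j => by simp only [mem_Icc]; omega
  rw [hswap]
  refine sum_congr rfl fun j _ => ?_
  rw [sum_Icc_backwardDiff, hr0, sub_zero]

theorem tail_succ_le_of_greedy {L l : ℕ} {a o : ℕ → ℝ} {α e : ℝ} (hl : l ≤ L) (hα : 0 ≤ α)
    (ho : ∀ j, 0 ≤ o j)
    (h : (1 - α) * (∑ j ∈ Icc l L, a j - ∑ j ∈ Icc (l + 1) L, o j) - e ≤ a l) :
    ∑ j ∈ Icc (l + 1) L, a j ≤ α * ∑ j ∈ Icc l L, a j + ∑ j ∈ Icc (l + 1) L, o j + e := by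
  have hsplit : ∑ j ∈ Icc l L, a j = a l + ∑ j ∈ Icc (l + 1) L, a j := by
    rw [Icc_add_one_left_eq_Ioc, add_sum_Ioc_eq_sum_Icc hl]
  have hO : 0 ≤ ∑ j ∈ Icc (l + 1) L, o j := sum_nonneg fun j _ => ho j
  linarith [mul_nonneg hα hO]

theorem sum_Ico_backwardDiff_succ_le {L : ℕ} {r : ℕ → ℝ} (hL : 1 ≤ L) (hr1 : 0 ≤ r 1) :
    ∑ l ∈ Ico 1 L, backwardDiff r (l + 1) ≤ r L := by
  simp only [backwardDiff, Nat.add_sub_cancel]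
  linarith [sum_Ico_sub r hL]

section Doubling

variable {L : ℕ} {r : ℕ → ℝ}

theorem nonneg_of_doubling (hr0 : 0 ≤ r 0) (hr1 : 0 ≤ r 1)
    (hr : ∀ l, 1 ≤ l → l < L → r (l + 1) = 2 * r l) : ∀ l ≤ L, 0 ≤ r l
  | 0, _ => hr0
  | 1, _ => hr1
  | l + 2, hl => by
    rw [hr (l + 1) (by omega) (by omega)]
    exact mul_nonneg zero_le_two (nonneg_of_doubling hr0 hr1 hr (l + 1) (by omega))

theorem backwardDiff_succ_of_doubling (hr : ∀ l, 1 ≤ l → l < L → r (l + 1) = 2 * r l) {l : ℕ}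
    (hl : l ∈ Ico 1 L) : backwardDiff r (l + 1) = r l := by
  rw [mem_Ico] at hl
  rw [backwardDiff, Nat.add_sub_cancel, hr l hl.1 hl.2]
  ring

theorem backwardDiff_nonneg_of_doubling (hr0 : r 0 = 0) (hr1 : 0 ≤ r 1)
    (hr : ∀ l, 1 ≤ l → l < L → r (l + 1) = 2 * r l) : ∀ l ∈ Icc 1 L, 0 ≤ backwardDiff r l
  | 0, h => by simp at h
  | 1, _ => by simpa [backwardDiff, hr0] using hr1
  | k + 2, hk => by
    rw [mem_Icc] at hk
    rw [backwardDiff_succ_of_doubling hr (mem_Ico.2 ⟨by omega, by omega⟩)]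
    exact nonneg_of_doubling hr0.ge hr1 hr (k + 1) (by omega)

theorem backwardDiff_succ_le_two_mul_of_doubling (hr0 : r 0 = 0) (hr1 : 0 ≤ r 1)
    (hr : ∀ l, 1 ≤ l → l < L → r (l + 1) = 2 * r l) :
    ∀ l ∈ Ico 1 L, backwardDiff r (l + 1) ≤ 2 * backwardDiff r l
  | 0, h => by simp at h
  | 1, hl => by
    rw [backwardDiff_succ_of_doubling hr hl, backwardDiff, Nat.sub_self, hr0]
    linarith
  | k + 2, hk => by
    rw [mem_Ico] at hk
    rw [backwardDiff_succ_of_doubling hr (mem_Ico.2 hk),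
      backwardDiff_succ_of_doubling hr (mem_Ico.2 ⟨by omega, by omega⟩),
      hr (k + 1) (by omega) (by omega)]

end Doubling

theorem sum_mul_le_of_tail_recurrence {L : ℕ} {A O g : ℕ → ℝ} {α e : ℝ} (hL : 1 ≤ L)
    (hα : 0 ≤ α) (hA : ∀ l, 0 ≤ A l) (hg : ∀ l ∈ Icc 1 L, 0 ≤ g l)
    (hg_succ : ∀ l ∈ Ico 1 L, g (l + 1) ≤ 2 * g l) (h_one : A 1 ≤ O 1)
    (hrec : ∀ l ∈ Ico 1 L, A (l + 1) ≤ α * A l + O (l + 1) + e) :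
    ∑ l ∈ Icc 1 L, A l * g l
      ≤ ∑ l ∈ Icc 1 L, O l * g l + 2 * α * ∑ l ∈ Icc 1 L, A l * g l
        + e * ∑ l ∈ Ico 1 L, g (l + 1) := by
  have hg_succ_nonneg : ∀ l ∈ Ico 1 L, 0 ≤ g (l + 1) := fun l hl =>
    hg (l + 1) (by simp only [mem_Icc, mem_Ico] at hl ⊢; omega)
  have hshift : ∑ l ∈ Ico 1 L, A l * g (l + 1) ≤ 2 * ∑ l ∈ Icc 1 L, A l * g l := calc
    ∑ l ∈ Ico 1 L, A l * g (l + 1) ≤ ∑ l ∈ Ico 1 L, 2 * (A l * g l) :=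
      sum_le_sum fun l hl => by linarith [mul_le_mul_of_nonneg_left (hg_succ l hl) (hA l)]
    _ ≤ 2 * ∑ l ∈ Icc 1 L, A l * g l := by
      rw [← mul_sum]
      gcongr
      · exact fun l hl _ => mul_nonneg (hA l) (hg l hl)
      · exact Ico_subset_Icc_self
  calc ∑ l ∈ Icc 1 L, A l * g l = A 1 * g 1 + ∑ l ∈ Ico 1 L, A (l + 1) * g (l + 1) :=
        sum_Icc_one_eq_add_sum_Ico_succ hL _
    _ ≤ O 1 * g 1 + ∑ l ∈ Ico 1 L, (α * A l + O (l + 1) + e) * g (l + 1) := by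
      gcongr with l hl
      · exact hg 1 (by simp [hL])
      · exact hg_succ_nonneg l hl
      · exact hrec l hl
    _ = ∑ l ∈ Icc 1 L, O l * g l + α * ∑ l ∈ Ico 1 L, A l * g (l + 1)
          + e * ∑ l ∈ Ico 1 L, g (l + 1) := by
      rw [sum_Icc_one_eq_add_sum_Ico_succ hL, mul_sum, mul_sum]
      simp only [add_mul, sum_add_distrib, mul_assoc]
      ring
    _ ≤ _ := by linarith [mul_le_mul_of_nonneg_left hshift hα]

theorem le_of_le_add_two_mul_self {x y e α : ℝ} (hα : 0 ≤ α) (hα' : α ≤ 1 / 4) (hy : 0 ≤ y)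
    (he : 0 ≤ e) (h : x ≤ y + 2 * α * x + e) : x ≤ (1 + 4 * α) * y + 4 * e := by
  have hpos : 0 < 1 - 2 * α := by linarith
  refine le_of_mul_le_mul_left ?_ hpos
  -- `(1 - 2α)(1 + 4α) = 1 + 2α(1 - 4α) ≥ 1`
  nlinarith [mul_nonneg hα (by linarith : (0 : ℝ) ≤ 1 - 4 * α)]

end GreedyCoverage

open GreedyCoverage

/-- From the per-level greedy coverage guarantee
`|a_l| ≥ (1-α)(A_l - O_{l+1}) - err`, the covered-cost sum is bounded:
`∑ |a_l| r_l ≤ (1 + O(α)) ∑ |o_l| r_l + O(err · r_L)`. -/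
theorem greedy_coverage_cost :
    ∃ c₀ C : ℝ, 0 < c₀ ∧ 0 < C ∧
      ∀ (L : ℕ) (r : ℕ → ℝ) (a o : ℕ → ℕ) (α err : ℝ),
        1 ≤ L → r 0 = 0 → 0 ≤ r 1 →
        (∀ l, 1 ≤ l → l < L → r (l + 1) = 2 * r l) →
        0 < α → α < c₀ → 0 ≤ err →
        (∑ j ∈ Finset.Icc 1 L, a j = ∑ j ∈ Finset.Icc 1 L, o j) →
        (∀ l, 1 ≤ l → l ≤ L →
          (1 - α) * ((∑ j ∈ Finset.Icc l L, (a j : ℝ))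
              - (∑ j ∈ Finset.Icc (l + 1) L, (o j : ℝ))) - err
            ≤ (a l : ℝ)) →
        ∑ l ∈ Finset.Icc 1 L, (a l : ℝ) * r l
          ≤ (1 + C * α) * (∑ l ∈ Finset.Icc 1 L, (o l : ℝ) * r l) + C * err * r L := by
  refine ⟨1 / 4, 4, by norm_num, by norm_num, ?_⟩
  intro L r a o α err hL hr0 hr1 hr hα hαc herr htotal hgreedy
  have hrec : ∀ l ∈ Ico 1 L, ∑ j ∈ Icc (l + 1) L, (a j : ℝ)
      ≤ α * ∑ j ∈ Icc l L, (a j : ℝ) + ∑ j ∈ Icc (l + 1) L, (o j : ℝ) + err := fun l hl =>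
    have hl := mem_Ico.1 hl
    tail_succ_le_of_greedy hl.2.le hα.le (fun j => Nat.cast_nonneg _) (hgreedy l hl.1 hl.2.le)
  have htail_nonneg (f : ℕ → ℕ) (l : ℕ) : 0 ≤ ∑ j ∈ Icc l L, (f j : ℝ) :=
    sum_nonneg fun j _ => Nat.cast_nonneg _
  have hkey := sum_mul_le_of_tail_recurrence (O := fun l => ∑ j ∈ Icc l L, (o j : ℝ)) hL hα.le
    (htail_nonneg a) (backwardDiff_nonneg_of_doubling hr0 hr1 hr)
    (backwardDiff_succ_le_two_mul_of_doubling hr0 hr1 hr) (by exact_mod_cast htotal.le) hrec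
  have herr_gap := mul_le_mul_of_nonneg_left (sum_Ico_backwardDiff_succ_le hL hr1) herr
  rw [sum_Icc_mul_eq_sum_tail_mul_backwardDiff hr0, sum_Icc_mul_eq_sum_tail_mul_backwardDiff hr0,
    mul_assoc]
  refine le_of_le_add_two_mul_self hα.le hαc.le ?_ (mul_nonneg herr ?_) (hkey.trans (by linarith))
  · exact sum_nonneg fun l hl => mul_nonneg (htail_nonneg o l)
      (backwardDiff_nonneg_of_doubling hr0 hr1 hr l hl)
  · exact nonneg_of_doubling hr0.ge hr1 hr L le_rfl
end
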